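/- Fix real numbers T > 0 and M > 0, and fix constants a0 and m0 with 5/4 ≤ a0 and a0 + 1 < m0. Then there exist λ0 > 0 and C > 0 such that for every λ ≥ λ0, every s ≥ 1 and every t ∈ (0,T): s^{15/2} · λ^{20} · e^{−4 m0 s α̂(t) + 2 m0 s α*(t)} · ξ̂(t)^{15/2} ≤ C · e^{−2(1 + a0) s α*(t)}. -/

import Mathlib

open Filter Real Set

/-- The Carleman weight `α*(t) = (e^{12λM} − e^{10λM})/(t(T−t))⁵`. -/
noncomputable def alphaStar (T M lam t : ℝ) : ℝ :=
  (Real.exp (12 * lam * M) - Real.exp (10 * lam * M)) / (t * (T - t)) ^ 5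

/-- The Carleman weight `α̂(t) = (e^{12λM} − e^{11λM})/(t(T−t))⁵`. -/
noncomputable def alphaHat (T M lam t : ℝ) : ℝ :=
  (Real.exp (12 * lam * M) - Real.exp (11 * lam * M)) / (t * (T - t)) ^ 5

/-- The Carleman weight `ξ̂(t) = e^{11λM}/(t(T−t))⁵`. -/
noncomputable def xiHat (T M lam t : ℝ) : ℝ :=
  Real.exp (11 * lam * M) / (t * (T - t)) ^ 5

/-!
Put `δ = m0 − a0 − 1 > 0`. Once `λ` is so large that `4 m0 e^{11λM} ≤ δ e^{12λM}`, the exponent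
`−4m0 sα̂ + 2m0 sα* + 2(1+a0) sα*` is at most `−δ sξ̂`, because the `e^{10λM}` part of `α*` enters
with a favourable sign. What remains, `(sξ̂)^{15/2} λ^{20} e^{−δ sξ̂}`, is bounded: one half of the
exponential absorbs `(sξ̂)^{15/2}`, the other absorbs `λ^{20}` since `sξ̂ ≥ e^{11λM}/(T²/4)⁵` grows
doubly exponentially in `λ`.
-/

lemma exists_pos_rpow_mul_exp_neg_mul_le {p c : ℝ} (hp : 0 ≤ p) (hc : 0 < c) :
    ∃ C > 0, ∀ x, 0 ≤ x → x ^ p * exp (-c * x) ≤ C := by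
  obtain ⟨R, hR⟩ := eventually_atTop.mp
    ((tendsto_rpow_mul_exp_neg_mul_atTop_nhds_zero p c hc).eventually_le_const one_pos)
  refine ⟨max (R ^ p) 1, by positivity, fun x hx => ?_⟩
  rcases le_total R x with hRx | hxR
  · exact (hR x hRx).trans (le_max_right _ _)
  · calc x ^ p * exp (-c * x) ≤ R ^ p * 1 := by
          refine mul_le_mul (rpow_le_rpow hx hxR hp) (exp_le_one_iff.mpr (by nlinarith))
            (exp_pos _).le (rpow_nonneg (hx.trans hxR) p)
      _ ≤ max (R ^ p) 1 := by simp

lemma eventually_pow_le_exp_mul_exp {c k : ℝ} (hc : 0 < c) (hk : 0 < k) (n : ℕ) :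
    ∀ᶠ x in atTop, x ^ n ≤ exp (c * exp (k * x)) := by
  have hlin : ∀ᶠ x in atTop, n * x ≤ c * exp (k * x) := by
    filter_upwards [((isLittleO_pow_exp_pos_mul_atTop 1 hk).const_mul_left (n : ℝ)).bound hc]
      with x hx
    simpa [abs_of_pos (exp_pos _)] using (le_abs_self _).trans hx
  filter_upwards [hlin, eventually_ge_atTop 0] with x hx hx0
  calc x ^ n ≤ exp x ^ n := by gcongr; linarith [add_one_le_exp x]
    _ = exp (n * x) := (exp_nat_mul x n).symm
    _ ≤ exp (c * exp (k * x)) := exp_le_exp.mpr hx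

lemma eventually_mul_exp_le_mul_exp {a b k l M : ℝ} (hb : 0 < b) (hkl : k < l) (hM : 0 < M) :
    ∀ᶠ lam in atTop, a * exp (k * lam * M) ≤ b * exp (l * lam * M) := by
  have hgrow : Tendsto (fun lam => b * exp (lam * ((l - k) * M))) atTop atTop :=
    (tendsto_exp_atTop.comp
      (tendsto_id.atTop_mul_const (mul_pos (sub_pos.2 hkl) hM))).const_mul_atTop hb
  filter_upwards [hgrow.eventually_ge_atTop a] with lam hlam
  calc a * exp (k * lam * M) ≤ b * exp (lam * ((l - k) * M)) * exp (k * lam * M) := by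
        gcongr
    _ = b * exp (l * lam * M) := by rw [mul_assoc, ← exp_add]; ring_nf

lemma xiHat_pos {T M lam t : ℝ} (ht : t ∈ Ioo 0 T) : 0 < xiHat T M lam t :=
  div_pos (exp_pos _) (pow_pos (mul_pos ht.1 (sub_pos.2 ht.2)) 5)

lemma exp_div_le_xiHat {T M lam t : ℝ} (ht : t ∈ Ioo 0 T) :
    exp (11 * lam * M) / (T ^ 2 / 4) ^ 5 ≤ xiHat T M lam t := by
  have : 0 < t * (T - t) := mul_pos ht.1 (sub_pos.2 ht.2)
  unfold xiHat
  gcongr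
  nlinarith [sq_nonneg (T - 2 * t)]

lemma eventually_pow_le_exp_mul_xiHat {T M c : ℝ} (hT : 0 < T) (hM : 0 < M) (hc : 0 < c)
    (n : ℕ) : ∀ᶠ lam in atTop, ∀ t ∈ Ioo 0 T, lam ^ n ≤ exp (c * xiHat T M lam t) := by
  filter_upwards [eventually_pow_le_exp_mul_exp (c := c / (T ^ 2 / 4) ^ 5) (by positivity)
    (by positivity : 0 < 11 * M) n] with lam hlam t ht
  refine hlam.trans (exp_le_exp.mpr ?_)
  rw [show 11 * M * lam = 11 * lam * M by ring, div_mul_eq_mul_div, mul_div_assoc]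
  exact mul_le_mul_of_nonneg_left (exp_div_le_xiHat ht) hc.le

lemma carleman_exponent_le {T M lam t s a0 m0 : ℝ} (ht : t ∈ Ioo 0 T) (hs : 0 ≤ s)
    (hlamM : 0 ≤ lam * M) (hm0 : a0 + 1 < m0) (hsum : 0 ≤ m0 + 1 + a0)
    (hlarge : 4 * m0 * exp (11 * lam * M) ≤ (m0 - a0 - 1) * exp (12 * lam * M)) :
    -4 * m0 * s * alphaHat T M lam t + 2 * m0 * s * alphaStar T M lam t ≤
      -(m0 - a0 - 1) * (s * xiHat T M lam t) - 2 * (1 + a0) * s * alphaStar T M lam t := by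
  have hD : 0 < (t * (T - t)) ^ 5 := pow_pos (mul_pos ht.1 (sub_pos.2 ht.2)) 5
  have h1112 : exp (11 * lam * M) ≤ exp (12 * lam * M) := exp_le_exp.mpr (by linarith)
  have key : -4 * m0 * (exp (12 * lam * M) - exp (11 * lam * M)) +
      2 * (m0 + 1 + a0) * (exp (12 * lam * M) - exp (10 * lam * M)) ≤
        -(m0 - a0 - 1) * exp (11 * lam * M) := by
    nlinarith [exp_pos (10 * lam * M)]
  unfold alphaHat alphaStar xiHat
  linear_combination (s / (t * (T - t)) ^ 5) * key

lemma weight_comparison_of_bounds {T M lam t s a0 m0 C : ℝ} (ht : t ∈ Ioo 0 T) (hs : 1 ≤ s)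
    (hlamM : 0 ≤ lam * M) (hm0 : a0 + 1 < m0) (hsum : 0 ≤ m0 + 1 + a0)
    (hlarge : 4 * m0 * exp (11 * lam * M) ≤ (m0 - a0 - 1) * exp (12 * lam * M))
    (hC : ∀ x, 0 ≤ x → x ^ ((15 : ℝ) / 2) * exp (-((m0 - a0 - 1) / 2) * x) ≤ C)
    (hpow : lam ^ 20 ≤ exp ((m0 - a0 - 1) / 2 * xiHat T M lam t)) :
    s ^ ((15 : ℝ) / 2) * lam ^ 20 *
        exp (-4 * m0 * s * alphaHat T M lam t + 2 * m0 * s * alphaStar T M lam t) *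
        (xiHat T M lam t) ^ ((15 : ℝ) / 2) ≤
      C * exp (-2 * (1 + a0) * s * alphaStar T M lam t) := by
  have hexp := carleman_exponent_le (s := s) ht (by linarith) hlamM hm0 hsum hlarge
  set δ := m0 - a0 - 1
  set x := s * xiHat T M lam t
  have hx : xiHat T M lam t ≤ x := le_mul_of_one_le_left (xiHat_pos ht).le hs
  have hx0 : 0 ≤ x := (xiHat_pos ht).le.trans hx
  calc s ^ ((15 : ℝ) / 2) * lam ^ 20 *
        exp (-4 * m0 * s * alphaHat T M lam t + 2 * m0 * s * alphaStar T M lam t) *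
        (xiHat T M lam t) ^ ((15 : ℝ) / 2)
    _ = x ^ ((15 : ℝ) / 2) * lam ^ 20 *
        exp (-4 * m0 * s * alphaHat T M lam t + 2 * m0 * s * alphaStar T M lam t) := by
      rw [mul_rpow (by linarith) (xiHat_pos ht).le]; ring
    _ ≤ x ^ ((15 : ℝ) / 2) * exp (δ / 2 * x) *
        exp (-δ * x - 2 * (1 + a0) * s * alphaStar T M lam t) := by
      gcongr
      exact hpow.trans (exp_le_exp.mpr (by gcongr; linarith))
    _ = x ^ ((15 : ℝ) / 2) * exp (-(δ / 2) * x) *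
        exp (-2 * (1 + a0) * s * alphaStar T M lam t) := by
      rw [mul_assoc, ← exp_add, mul_assoc (x ^ _), ← exp_add]; ring_nf
    _ ≤ C * exp (-2 * (1 + a0) * s * alphaStar T M lam t) := by
      gcongr
      exact hC x hx0

/-- Weight comparison used to absorb the `θ`-term in the proof of
Proposition 3.1 of the paper: for `5/4 ≤ a0` and `a0 + 1 < m0`,
`s^{15/2} λ^{20} e^{−4m0 sα̂ + 2m0 sα*} ξ̂^{15/2} ≤ C e^{−2(1+a0)sα*}`. -/
theorem weight_comparison_absorption (T M : ℝ) (hT : 0 < T) (hM : 0 < M)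
    (a0 m0 : ℝ) (ha0 : 5 / 4 ≤ a0) (hm0 : a0 + 1 < m0) :
    ∃ lam0 > (0 : ℝ), ∃ C > (0 : ℝ),
      ∀ lam ≥ lam0, ∀ s ≥ (1 : ℝ), ∀ t ∈ Set.Ioo (0 : ℝ) T,
        s ^ ((15 : ℝ) / 2) * lam ^ 20 *
            Real.exp (-4 * m0 * s * alphaHat T M lam t +
              2 * m0 * s * alphaStar T M lam t) *
            (xiHat T M lam t) ^ ((15 : ℝ) / 2) ≤
          C * Real.exp (-2 * (1 + a0) * s * alphaStar T M lam t) := by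
  have hδ : 0 < m0 - a0 - 1 := by linarith
  obtain ⟨C, hC0, hC⟩ :=
    exists_pos_rpow_mul_exp_neg_mul_le (p := 15 / 2) (by norm_num) (half_pos hδ)
  obtain ⟨lam0, hlam0⟩ := eventually_atTop.mp <|
    (eventually_mul_exp_le_mul_exp (a := 4 * m0) hδ (by norm_num : (11 : ℝ) < 12) hM).and <|
      (eventually_pow_le_exp_mul_xiHat hT hM (half_pos hδ) 20).and (eventually_ge_atTop 1)
  refine ⟨max lam0 1, by positivity, C, hC0, fun lam hlam s hs t ht => ?_⟩
  obtain ⟨hlarge, hpow, hlam1⟩ := hlam0 lam (le_of_max_le_left hlam)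
  exact weight_comparison_of_bounds ht hs (by nlinarith) hm0 (by linarith) hlarge hC (hpow t ht)
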